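/- arXiv:0803.1852 — 3 statements merged into one kernel-verified Lean document; each statement's English description precedes it below -/
import Mathlib

section
/- Let A be a densely defined nonnegative symmetric operator that is p(t)-homogeneous with respect to a family of unitary operators {U_t} closed under adjoints. Then the Krein–von Neumann extension A_N of A is also p(t)-homogeneous with respect to {U_t}. -/
/-!
Write `Φ(f, f') = ‖f'‖² + Re⟪f', f⟫`, so that `{f, f'} ∈ A_N` iff `{f, f'} ∈ A*` and
`Φ(f - h, f' - A h)` has infimum `0` over `h ∈ D(A)`. If `A = 0` then `A_N = 0` on all of `H`.
Otherwise nonnegativity forces `p t > 0`, and `V ⊕ c V` with `V = U t`, `c = (p t)⁻¹` maps the graph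
of `A`, hence that of `A*`, into itself, with `Φ(V f, c V f') = c² ‖f'‖² + c Re⟪f', f⟫`.
If `Φ ≥ 0` on the graph of `A*`, its value at the image under `V⁻¹ ⊕ c⁻¹ V⁻¹` is nonnegative,
which gives `Φ(V f, c V f') ≤ (c + c²) Φ(f, f')`, so the infimum condition is carried along.
If `Φ < 0` somewhere on the graph of `A*`, perturbing that point shows that every point of `A*`
satisfies the infimum condition, so `A_N = A*`, which is invariant.
-/

open InnerProductSpace

/-- `p(t)`-homogeneity for unbounded operators. -/
def IsPtHomogeneous {H : Type*} [NormedAddCommGroup H] [InnerProductSpace ℂ H]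
    {T : Type*} (U : T → (H ≃ₗᵢ[ℂ] H)) (p : T → ℝ) (A : H →ₗ.[ℂ] H) : Prop :=
  ∀ t : T, (∀ x : H, x ∈ A.domain ↔ U t x ∈ A.domain) ∧
    ∀ (x : H) (hx : x ∈ A.domain) (hx' : U t x ∈ A.domain),
      U t (A ⟨x, hx⟩) = (p t : ℂ) • A ⟨U t x, hx'⟩

open RCLike Topology

section InnerProductSpace

variable (𝕜 : Type*) {E : Type*} [RCLike 𝕜] [NormedAddCommGroup E] [InnerProductSpace 𝕜 E]

noncomputable def kreinForm (f f' : E) : ℝ :=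
  ‖f'‖ ^ 2 + re ⟪f', f⟫_𝕜

variable {𝕜}

theorem kreinForm_smul_map (V : E ≃ₗᵢ[𝕜] E) (c : ℝ) (f f' : E) :
    kreinForm 𝕜 (V f) ((c : 𝕜) • V f') = c ^ 2 * ‖f'‖ ^ 2 + c * re ⟪f', f⟫_𝕜 := by
  simp [kreinForm, norm_smul, inner_smul_left, mul_pow]

theorem kreinForm_smul_map_le (V : E ≃ₗᵢ[𝕜] E) {c : ℝ} (hc : 0 < c) {f f' : E}
    (h : 0 ≤ kreinForm 𝕜 (V.symm f) (((c⁻¹ : ℝ) : 𝕜) • V.symm f')) :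
    kreinForm 𝕜 (V f) ((c : 𝕜) • V f') ≤ (c + c ^ 2) * kreinForm 𝕜 f f' := by
  rw [kreinForm_smul_map] at h ⊢
  have hscaled : c ^ 3 * (c⁻¹ ^ 2 * ‖f'‖ ^ 2 + c⁻¹ * re ⟪f', f⟫_𝕜)
      = c * ‖f'‖ ^ 2 + c ^ 2 * re ⟪f', f⟫_𝕜 := by
    field_simp
  have := mul_nonneg (pow_pos hc 3).le h
  rw [hscaled] at this
  rw [kreinForm]
  linarith

end InnerProductSpace

namespace LinearPMap

variable {𝕜 E : Type*} [RCLike 𝕜] [NormedAddCommGroup E] [InnerProductSpace 𝕜 E]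

def GraphInvariant (A : E →ₗ.[𝕜] E) (V : E ≃ₗᵢ[𝕜] E) (c : ℝ) : Prop :=
  ∀ x : A.domain, ∃ hx : V x ∈ A.domain, A ⟨V x, hx⟩ = (c : 𝕜) • V (A x)

theorem IsFormalAdjoint.apply_eq_zero_of_re_inner_self_eq_zero {A : E →ₗ.[𝕜] E}
    (hA : Dense (A.domain : Set E)) (hsym : A.IsFormalAdjoint A)
    (h : ∀ x : A.domain, re ⟪(x : E), A x⟫_𝕜 = 0) (y : A.domain) : A y = 0 := by
  have hre : ∀ x : A.domain, re ⟪(x : E), A y⟫_𝕜 = 0 := by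
    intro x
    have hxy := h (x + y)
    have hyx : re ⟪(y : E), A x⟫_𝕜 = re ⟪(x : E), A y⟫_𝕜 := by
      rw [← hsym, ← inner_conj_symm, conj_re]
    simp only [LinearPMap.map_add, _root_.map_add, Submodule.coe_add, inner_add_left,
      inner_add_right] at hxy
    rw [h x, h y, hyx] at hxy
    linarith
  refine hA.eq_zero_of_inner_right 𝕜 fun v hv => ?_
  have hv := hre (⟪v, A y⟫_𝕜 • ⟨v, hv⟩)
  rw [Submodule.coe_smul, inner_smul_left, RCLike.conj_mul, re_ofReal_pow] at hv
  simpa using hv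

variable [CompleteSpace E]

theorem exists_adjoint_apply_eq {T : E →ₗ.[𝕜] E} (hT : Dense (T.domain : Set E)) {y w : E}
    (h : ∀ x : T.domain, ⟪w, x⟫_𝕜 = ⟪y, T x⟫_𝕜) : ∃ hy : y ∈ T†.domain, T† ⟨y, hy⟩ = w :=
  ⟨mem_adjoint_domain_of_exists y ⟨w, h⟩, adjoint_apply_eq hT _ h⟩

theorem GraphInvariant.adjoint {A : E →ₗ.[𝕜] E} {V : E ≃ₗᵢ[𝕜] E} {c : ℝ}
    (hA : Dense (A.domain : Set E)) (h : GraphInvariant A V c)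
    (hsymm : ∀ x : A.domain, V.symm x ∈ A.domain) : GraphInvariant A† V c := by
  intro y
  refine exists_adjoint_apply_eq hA fun x => ?_
  obtain ⟨hx, hAx⟩ := h ⟨V.symm x, hsymm x⟩
  have hVx : (⟨V (V.symm x), hx⟩ : A.domain) = x := Subtype.ext (V.apply_symm_apply x)
  rw [hVx] at hAx
  rw [hAx, inner_smul_left, inner_smul_right, conj_ofReal, V.inner_map_eq_flip, V.inner_map_map]
  exact congrArg _ (adjoint_isFormalAdjoint hA y ⟨_, hsymm x⟩)

def IsKreinVonNeumann (A AN : E →ₗ.[𝕜] E) : Prop :=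
  ∀ f f' : E, (∃ hf : f ∈ AN.domain, AN ⟨f, hf⟩ = f') ↔
    (∃ hf : f ∈ A†.domain, A† ⟨f, hf⟩ = f') ∧
      ∀ ε : ℝ, 0 < ε → ∃ h : A.domain, kreinForm 𝕜 (f - h) (f' - A h) < ε

namespace IsKreinVonNeumann

variable {A AN : E →ₗ.[𝕜] E} (hAN : IsKreinVonNeumann A AN)
include hAN

theorem adjoint_apply (x : AN.domain) : ∃ hx : (x : E) ∈ A†.domain, A† ⟨x, hx⟩ = AN x :=
  ((hAN x (AN x)).mp ⟨x.2, rfl⟩).1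

theorem exists_kreinForm_lt (x : AN.domain) {ε : ℝ} (hε : 0 < ε) :
    ∃ h : A.domain, kreinForm 𝕜 ((x : E) - h) (AN x - A h) < ε :=
  ((hAN x (AN x)).mp ⟨x.2, rfl⟩).2 ε hε

theorem exists_apply_eq_zero (hA : Dense (A.domain : Set E)) (hzero : ∀ x : A.domain, A x = 0)
    (y : E) : ∃ hy : y ∈ AN.domain, AN ⟨y, hy⟩ = 0 := by
  refine (hAN y 0).mpr ⟨exists_adjoint_apply_eq hA fun x => by simp [hzero], fun ε hε => ⟨0, ?_⟩⟩
  simpa [kreinForm, hzero] using hε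

/-- The characterisation only asks the infimum to be `≤ 0`; so once the form is negative somewhere
on the graph of `A†`, the extension `AN` has the whole domain of `A†`. -/
theorem mem_domain_of_kreinForm_neg (z : A†.domain) (m : A.domain)
    (hneg : kreinForm 𝕜 ((z : E) - m) (A† z - A m) < 0) {w : E} (hw : w ∈ A†.domain) :
    w ∈ AN.domain := by
  have mem_of_neg (u : A†.domain) (hu : kreinForm 𝕜 ((u : E) - m) (A† u - A m) < 0) :
      (u : E) ∈ AN.domain :=
    ((hAN u (A† u)).mpr ⟨⟨u.2, rfl⟩, fun _ hε => ⟨m, hu.trans hε⟩⟩).1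
  let u : ℝ → A†.domain := fun τ => z + (τ : 𝕜) • ⟨w, hw⟩
  have hcont : Continuous fun τ : ℝ => kreinForm 𝕜 ((u τ : E) - m) (A† (u τ) - A m) := by
    simp only [u, kreinForm, LinearPMap.map_add, LinearPMap.map_smul, Submodule.coe_add,
      Submodule.coe_smul]
    fun_prop
  have hneg' : kreinForm 𝕜 ((u 0 : E) - m) (A† (u 0) - A m) < 0 := by
    simpa only [u, ofReal_zero, zero_smul, add_zero] using hneg
  have hev : ∀ᶠ τ in 𝓝[≠] 0, kreinForm 𝕜 ((u τ : E) - m) (A† (u τ) - A m) < 0 ∧ τ ≠ 0 :=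
    (((hcont.tendsto 0).eventually (gt_mem_nhds hneg')).filter_mono nhdsWithin_le_nhds).and
      self_mem_nhdsWithin
  obtain ⟨τ, hτ, hτ0⟩ := hev.exists
  have hτw := AN.domain.sub_mem (mem_of_neg _ hτ) (mem_of_neg z hneg)
  have hτ0' : (τ : 𝕜) ≠ 0 := by exact_mod_cast hτ0
  simpa [u, hτ0'] using AN.domain.smul_mem (τ : 𝕜)⁻¹ hτw

theorem exists_kreinForm_map_lt_of_nonneg
    (hpos : ∀ (z : A†.domain) (m : A.domain), 0 ≤ kreinForm 𝕜 ((z : E) - m) (A† z - A m))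
    (hA : Dense (A.domain : Set E)) {V : E ≃ₗᵢ[𝕜] E} {c : ℝ} (hc : 0 < c)
    (hV : GraphInvariant A V c) (hVsymm : GraphInvariant A V.symm c⁻¹)
    (x : AN.domain) {ε : ℝ} (hε : 0 < ε) :
    ∃ h : A.domain, kreinForm 𝕜 (V x - h) ((c : 𝕜) • V (AN x) - A h) < ε := by
  obtain ⟨hx, hAx⟩ := hAN.adjoint_apply x
  obtain ⟨h, hh⟩ := hAN.exists_kreinForm_lt x (show 0 < ε / (c + c ^ 2) by positivity)
  obtain ⟨hVh, hAVh⟩ := hV h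
  refine ⟨⟨V h, hVh⟩, ?_⟩
  obtain ⟨hz, hAz⟩ := (hVsymm.adjoint hA fun y => by simpa using (hV y).1) ⟨x, hx⟩
  obtain ⟨hm, hAm⟩ := hVsymm h
  have hsymm := hpos ⟨_, hz⟩ ⟨_, hm⟩
  rw [hAz, hAm, hAx, ← smul_sub, ← _root_.map_sub, ← _root_.map_sub] at hsymm
  rw [hAVh, ← smul_sub, ← _root_.map_sub, ← _root_.map_sub]
  calc _ ≤ (c + c ^ 2) * kreinForm 𝕜 ((x : E) - h) (AN x - A h) :=
        kreinForm_smul_map_le V hc hsymm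
    _ < (c + c ^ 2) * (ε / (c + c ^ 2)) := by gcongr
    _ = ε := by field_simp

theorem graphInvariant (hA : Dense (A.domain : Set E)) {V : E ≃ₗᵢ[𝕜] E} {c : ℝ} (hc : 0 < c)
    (hV : GraphInvariant A V c) (hVsymm : GraphInvariant A V.symm c⁻¹) :
    GraphInvariant AN V c := by
  intro x
  obtain ⟨hx, hAx⟩ := hAN.adjoint_apply x
  obtain ⟨hVx, hAVx⟩ := hV.adjoint hA (fun y => (hVsymm y).1) ⟨x, hx⟩
  rw [hAx] at hAVx
  by_cases hpos : ∀ (z : A†.domain) (m : A.domain), 0 ≤ kreinForm 𝕜 ((z : E) - m) (A† z - A m)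
  · exact (hAN _ _).mpr ⟨⟨hVx, hAVx⟩, fun _ hε =>
      hAN.exists_kreinForm_map_lt_of_nonneg hpos hA hc hV hVsymm x hε⟩
  · push Not at hpos
    obtain ⟨z, m, hneg⟩ := hpos
    have hmem := hAN.mem_domain_of_kreinForm_neg z m hneg hVx
    obtain ⟨_, hANVx⟩ := hAN.adjoint_apply ⟨_, hmem⟩
    exact ⟨hmem, hANVx.symm.trans hAVx⟩

end IsKreinVonNeumann

end LinearPMap

namespace IsPtHomogeneous

variable {H T : Type*} [NormedAddCommGroup H] [InnerProductSpace ℂ H] {U : T → H ≃ₗᵢ[ℂ] H}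
  {p : T → ℝ} {A : H →ₗ.[ℂ] H}

theorem graphInvariant (hA : IsPtHomogeneous U p A) {t : T} (ht : p t ≠ 0) :
    A.GraphInvariant (U t) (p t)⁻¹ := by
  intro x
  have hx := ((hA t).1 x).mp x.2
  refine ⟨hx, ?_⟩
  rw [(hA t).2 x x.2 hx, smul_smul]
  simp [ht]

theorem graphInvariant_symm (hA : IsPtHomogeneous U p A) (t : T) :
    A.GraphInvariant (U t).symm (p t) := by
  intro x
  have hUx : U t ((U t).symm x) ∈ A.domain := by simp
  have hx := ((hA t).1 _).mpr hUx
  refine ⟨hx, (U t).injective ?_⟩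
  have hAUx := (hA t).2 _ hx hUx
  rw [show (⟨U t ((U t).symm x), hUx⟩ : A.domain) = x from Subtype.ext (by simp)] at hAUx
  rw [hAUx, map_smul, LinearIsometryEquiv.apply_symm_apply]
  -- the two sides differ only in the coercion `ℝ → ℂ` (`Complex.ofReal` versus `RCLike.ofReal`)
  rfl

theorem pos (hA : IsPtHomogeneous U p A) (hdense : Dense (A.domain : Set H))
    (hsym : A.IsFormalAdjoint A) (hnonneg : ∀ x : A.domain, 0 ≤ (⟪(x : H), A x⟫_ℂ).re)
    (hne : ∃ x : A.domain, A x ≠ 0) (t : T) : 0 < p t := by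
  by_contra! hp
  obtain ⟨y, hy⟩ := hne
  refine hy (hsym.apply_eq_zero_of_re_inner_self_eq_zero hdense (fun x => ?_) y)
  have hx := ((hA t).1 x).mp x.2
  refine le_antisymm ?_ (hnonneg x)
  calc (⟪(x : H), A x⟫_ℂ).re = (⟪U t x, U t (A x)⟫_ℂ).re := by
        rw [LinearIsometryEquiv.inner_map_map]
    _ = p t * (⟪U t x, A ⟨U t x, hx⟩⟫_ℂ).re := by
        rw [(hA t).2 x x.2 hx, inner_smul_right, Complex.re_ofReal_mul]
    _ ≤ 0 := mul_nonpos_of_nonpos_of_nonneg hp (hnonneg ⟨_, hx⟩)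

end IsPtHomogeneous

theorem isPtHomogeneous_of_graphInvariant {H T : Type*} [NormedAddCommGroup H]
    [InnerProductSpace ℂ H] {U : T → H ≃ₗᵢ[ℂ] H} {p : T → ℝ} {B : H →ₗ.[ℂ] H}
    (hp : ∀ t, p t ≠ 0) (hU : ∀ t, B.GraphInvariant (U t) (p t)⁻¹)
    (hUsymm : ∀ t, B.GraphInvariant (U t).symm (p t)) : IsPtHomogeneous U p B := by
  refine fun t => ⟨fun x => ⟨fun hx => (hU t ⟨x, hx⟩).1, fun hx => ?_⟩, fun x hx hx' => ?_⟩
  · simpa using (hUsymm t ⟨_, hx⟩).1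
  · rw [(hU t ⟨x, hx⟩).2, smul_smul]
    simp [hp t]

theorem isPtHomogeneous_of_forall_apply_eq_zero {H T : Type*} [NormedAddCommGroup H]
    [InnerProductSpace ℂ H] {U : T → H ≃ₗᵢ[ℂ] H} {p : T → ℝ} {B : H →ₗ.[ℂ] H}
    (hB : ∀ y : H, ∃ hy : y ∈ B.domain, B ⟨y, hy⟩ = 0) : IsPtHomogeneous U p B :=
  fun t => ⟨fun x => iff_of_true (hB x).1 (hB _).1,
    fun x hx hx' => by rw [(hB x).2, (hB _).2, map_zero, smul_zero]⟩

theorem krein_von_neumann_extension_pt_homogeneous_general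
    {H : Type*} [NormedAddCommGroup H] [InnerProductSpace ℂ H] [CompleteSpace H]
    {T : Type*} (U : T → (H ≃ₗᵢ[ℂ] H)) (p : T → ℝ)
    (A : H →ₗ.[ℂ] H) (hdense : Dense (A.domain : Set H))
    (hsym : ∀ x y : A.domain, (inner ℂ (A x) (y : H) : ℂ) = inner ℂ (x : H) (A y))
    (hnonneg : ∀ x : A.domain, 0 ≤ (inner ℂ (x : H) (A x) : ℂ).re)
    (hhom : IsPtHomogeneous U p A)
    (AN : H →ₗ.[ℂ] H)
    (hAN : ∀ (f f' : H),
      (∃ hf : f ∈ AN.domain, AN ⟨f, hf⟩ = f') ↔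
        ((∃ hf : f ∈ A.adjoint.domain, A.adjoint ⟨f, hf⟩ = f') ∧
          ∀ ε : ℝ, 0 < ε → ∃ h : A.domain,
            ‖f' - A h‖ ^ 2 + (inner ℂ (f' - A h) (f - (h : H)) : ℂ).re < ε)) :
    IsPtHomogeneous U p AN := by
  have hKvN : A.IsKreinVonNeumann AN := hAN
  by_cases hzero : ∀ x : A.domain, A x = 0
  · exact isPtHomogeneous_of_forall_apply_eq_zero (hKvN.exists_apply_eq_zero hdense hzero)
  push Not at hzero
  have hp t : 0 < p t := hhom.pos hdense hsym hnonneg hzero t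
  have hU t : A.GraphInvariant (U t) (p t)⁻¹ := hhom.graphInvariant (hp t).ne'
  refine isPtHomogeneous_of_graphInvariant (fun t => (hp t).ne') (fun t => ?_) (fun t => ?_)
  · exact hKvN.graphInvariant hdense (inv_pos.2 (hp t)) (hU t)
      (by simpa using hhom.graphInvariant_symm t)
  · exact hKvN.graphInvariant hdense (hp t) (hhom.graphInvariant_symm t) (by simpa using hU t)

/-- the Krein–von Neumann extension `AN` of a densely defined
nonnegative symmetric `p(t)`-homogeneous operator `A` is `p(t)`-homogeneous.
`AN` is characterized by: `{f, f'} ∈ AN` iff `{f, f'} ∈ A*` and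
`inf { ‖f' − Ah‖² + re (f' − Ah, f − h) : h ∈ D(A) } = 0`. -/
theorem krein_von_neumann_extension_pt_homogeneous
    {H : Type*} [NormedAddCommGroup H] [InnerProductSpace ℂ H] [CompleteSpace H]
    {T : Type*} (U : T → (H ≃ₗᵢ[ℂ] H)) (g : T → T) (p : T → ℝ)
    (hadj : ∀ (t : T) (x y : H), (inner ℂ (U t x) y : ℂ) = inner ℂ x (U (g t) y))
    (A : H →ₗ.[ℂ] H) (hdense : Dense (A.domain : Set H))
    (hsym : ∀ x y : A.domain, (inner ℂ (A x) (y : H) : ℂ) = inner ℂ (x : H) (A y))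
    (hnonneg : ∀ x : A.domain, 0 ≤ (inner ℂ (x : H) (A x) : ℂ).re)
    (hhom : IsPtHomogeneous U p A)
    (AN : H →ₗ.[ℂ] H)
    (hAN : ∀ (f f' : H),
      (∃ hf : f ∈ AN.domain, AN ⟨f, hf⟩ = f') ↔
        ((∃ hf : f ∈ A.adjoint.domain, A.adjoint ⟨f, hf⟩ = f') ∧
          ∀ ε : ℝ, 0 < ε → ∃ h : A.domain,
            ‖f' - A h‖ ^ 2 + (inner ℂ (f' - A h) (f - (h : H)) : ℂ).re < ε)) :
    IsPtHomogeneous U p AN :=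
  krein_von_neumann_extension_pt_homogeneous_general U p A hdense hsym hnonneg hhom AN hAN
end

section
/- Let A₀ be a nonnegative self-adjoint p(t)-homogeneous operator, G_t = (p(t)A₀ + I)(A₀ + I)⁻¹, and suppose h ∈ ℌ, h ≠ 0, satisfies G_t U_t h = ξ(t) h for all t ∈ 𝔗, where ξ is real-valued. Then ξ(t)·ξ(g(t)) = 1 for all t ∈ 𝔗. -/
open InnerProductSpace

/-! Since `U_t U_{g(t)} = I`, applying homogeneity at `g(t)` and then at `t` gives
`p(g(t)) p(t) A₀ = A₀`. Evaluating on `(A₀ + I)x`, which exhausts `ℌ`, this yields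
`G_t U_t G_{g(t)} = U_t`, and applied to `U_{g(t)} h` it gives `ξ(t) ξ(g(t)) h = h`. -/

theorem LinearIsometryEquiv.eq_symm_of_inner_map_left {𝕜 E : Type*} [RCLike 𝕜]
    [NormedAddCommGroup E] [InnerProductSpace 𝕜 E] (U : E ≃ₗᵢ[𝕜] E) {V : E → E}
    (hV : ∀ x y, inner 𝕜 (U x) y = inner 𝕜 x (V y)) (y : E) : V y = U.symm y :=
  ext_inner_left 𝕜 fun x => by
    rw [← hV, ← U.inner_map_map x (U.symm y), U.apply_symm_apply]

namespace IsPtHomogeneous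

variable {H : Type*} [NormedAddCommGroup H] [InnerProductSpace ℂ H] {T : Type*}
  {U : T → (H ≃ₗᵢ[ℂ] H)} {p : T → ℝ} {A : H →ₗ.[ℂ] H}

theorem map_mem_domain (hA : IsPtHomogeneous U p A) (t : T) {x : H} (hx : x ∈ A.domain) :
    U t x ∈ A.domain :=
  ((hA t).1 x).1 hx

theorem map_apply (hA : IsPtHomogeneous U p A) (t : T) (x : A.domain) :
    U t (A x) = (p t : ℂ) • A ⟨U t x, hA.map_mem_domain t x.2⟩ :=
  (hA t).2 x x.2 _

theorem smul_smul_apply (hA : IsPtHomogeneous U p A) {t s : T}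
    (hts : Function.LeftInverse (U t) (U s)) (x : A.domain) :
    (p s : ℂ) • (p t : ℂ) • A x = A x := by
  set z : A.domain := ⟨U s x, hA.map_mem_domain s x.2⟩
  have hz : (⟨U t z, hA.map_mem_domain t z.2⟩ : A.domain) = x := Subtype.ext (hts x)
  calc (p s : ℂ) • (p t : ℂ) • A x = U t (U s (A x)) := by
        rw [hA.map_apply s, map_smul, hA.map_apply t z, hz]
    _ = A x := hts _

theorem G_U_G_eq_U (hA : IsPtHomogeneous U p A) {t s : T}
    (hts : Function.LeftInverse (U t) (U s)) {Gt Gs : H → H}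
    (hGt : ∀ x : A.domain, Gt (A x + x) = (p t : ℂ) • A x + x)
    (hGs : ∀ x : A.domain, Gs (A x + x) = (p s : ℂ) • A x + x)
    (hsurj : ∀ v : H, ∃ x : A.domain, A x + x = v) (v : H) :
    Gt (U t (Gs v)) = U t v := by
  obtain ⟨x, rfl⟩ := hsurj v
  set y : A.domain := ⟨U t x, hA.map_mem_domain t x.2⟩
  calc Gt (U t (Gs (A x + x))) = Gt ((p s : ℂ) • (p t : ℂ) • A y + y) := by
        rw [hGs, map_add, map_smul, hA.map_apply t]
    _ = (p t : ℂ) • A y + y := by rw [hA.smul_smul_apply hts, hGt]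
    _ = U t (A x + x) := by rw [map_add, hA.map_apply t]

end IsPtHomogeneous

theorem xi_invariance_conjugation_general
    {H : Type*} [NormedAddCommGroup H] [InnerProductSpace ℂ H]
    {T : Type*} (U : T → (H ≃ₗᵢ[ℂ] H)) (g : T → T) (p : T → ℝ)
    (hadj : ∀ (t : T) (x y : H), (inner ℂ (U t x) y : ℂ) = inner ℂ x (U (g t) y))
    (A₀ : H →ₗ.[ℂ] H)
    (hhom : IsPtHomogeneous U p A₀)
    (G : T → (H →L[ℂ] H))
    (hG : ∀ (t : T) (x : A₀.domain), G t (A₀ x + (x : H)) = (p t : ℂ) • A₀ x + (x : H))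
    (hsurj : ∀ y : H, ∃ x : A₀.domain, A₀ x + (x : H) = y)
    (h : H) (hne : h ≠ 0) (ξ : T → ℝ)
    (hinv : ∀ t : T, G t (U t h) = (ξ t : ℂ) • h) :
    ∀ t : T, ξ t * ξ (g t) = 1 := by
  intro t
  have hU : Function.LeftInverse (U t) (U (g t)) := fun y => by
    rw [(U t).eq_symm_of_inner_map_left (hadj t), (U t).apply_symm_apply]
  have key := hhom.G_U_G_eq_U hU (hG t) (hG (g t)) hsurj (U (g t) h)
  rw [hinv (g t), hU, map_smul, map_smul, hinv t, smul_smul] at key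
  have hξ : (ξ (g t) : ℂ) * ξ t = 1 := smul_left_injective ℂ hne (key.trans (one_smul ℂ h).symm)
  exact_mod_cast (mul_comm _ _).trans hξ

/-- if `G_t U_t h = ξ(t) h` with `h ≠ 0` (i.e. the singular
element `ψ = (𝔸₀+I)h` is `ξ(t)`-invariant), then `ξ(t)·ξ(g(t)) = 1`. -/
theorem xi_invariance_conjugation
    {H : Type*} [NormedAddCommGroup H] [InnerProductSpace ℂ H] [CompleteSpace H]
    {T : Type*} (U : T → (H ≃ₗᵢ[ℂ] H)) (g : T → T) (p : T → ℝ)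
    (hadj : ∀ (t : T) (x y : H), (inner ℂ (U t x) y : ℂ) = inner ℂ x (U (g t) y))
    (hp : ∀ t, 0 < p t)
    (A₀ : H →ₗ.[ℂ] H) (hdense : Dense (A₀.domain : Set H))
    (hsa : A₀.adjoint = A₀)
    (hnonneg : ∀ x : A₀.domain, 0 ≤ (inner ℂ (x : H) (A₀ x) : ℂ).re)
    (hhom : IsPtHomogeneous U p A₀)
    (G : T → (H →L[ℂ] H))
    (hG : ∀ (t : T) (x : A₀.domain), G t (A₀ x + (x : H)) = (p t : ℂ) • A₀ x + (x : H))
    (hsurj : ∀ y : H, ∃ x : A₀.domain, A₀ x + (x : H) = y)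
    (h : H) (hne : h ≠ 0) (ξ : T → ℝ)
    (hinv : ∀ t : T, G t (U t h) = (ξ t : ℂ) • h) :
    ∀ t : T, ξ t * ξ (g t) = 1 :=
  xi_invariance_conjugation_general U g p hadj A₀ hhom G hG hsurj h hne ξ hinv
end

section
/- With A_sym as above (a densely defined symmetric restriction of a nonnegative self-adjoint A₀ with defect numbers (n,n)), define maps Γ̂₀, Γ̂₁ : D(A_sym*) → ℂⁿ by writing f = u + Σ αⱼhⱼ with u ∈ D(A₀), hⱼ = (𝔸₀+I)⁻¹ψⱼ, and setting Γ̂₀f = (α₁,…,αₙ), Γ̂₁f = (⟨ψ₁,u⟩,…,⟨ψₙ,u⟩). Then (ℂⁿ, Γ̂₀, Γ̂₁) is a boundary triplet for A_sym*: the Green identity (A_sym*f, g) − (f, A_sym*g) = (Γ̂₁f, Γ̂₀g) − (Γ̂₀f, Γ̂₁g) holds for all f, g ∈ D(A_sym*), and (Γ̂₀, Γ̂₁) : D(A_sym*) → ℂⁿ ⊕ ℂⁿ is surjective. -/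
/-!
A self-adjoint `A₀` with `re ⟪x, A₀ x⟫ ≥ 0` satisfies `‖x‖ ≤ ‖A₀ x + x‖`; together with the
closedness of `A₀` this makes `A₀ + I` map `D(A₀)` onto `H`. Consequently `A_sym` is densely
defined: if `(A₀ + I) r ⊥ D(A_sym)`, then `r ⊥ (span hⱼ)ᗮ`, so `r ∈ span hⱼ ∩ D(A₀) = 0`.
Since `⟪hⱼ, A_sym x⟫ = -⟪hⱼ, x⟫`, the adjoint acts on `u + ∑ cⱼ hⱼ` as `A₀ u - ∑ cⱼ hⱼ`, and the
Green identity is the expansion of both inner products using the symmetry of `A₀`. For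
surjectivity, solve the Gram system `⟪hⱼ, w⟫ = bⱼ` (linear independence), write
`w = (A₀ + I) v`, and take `f = v + ∑ aⱼ hⱼ`; its coefficients are unique because
`span hⱼ ∩ D(A₀) = 0`.
-/

open InnerProductSpace

/-- The symmetric restriction `A_sym` of `A₀` determined by the singular
elements represented by `h j = (𝔸₀ + I)⁻¹ ψ j`. -/
noncomputable def symRestrict {H : Type*} [NormedAddCommGroup H]
    [InnerProductSpace ℂ H] [CompleteSpace H] {n : ℕ}
    (A₀ : H →ₗ.[ℂ] H) (h : Fin n → H) : H →ₗ.[ℂ] H :=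
  A₀.domRestrict (Submodule.map A₀.domain.subtype
    (⨅ j : Fin n, LinearMap.ker
      (((innerSL ℂ (h j)) : H →ₗ[ℂ] ℂ) ∘ₗ (A₀.toFun + A₀.domain.subtype))))

namespace LinearPMap

variable {𝕜 E : Type*} [RCLike 𝕜] [NormedAddCommGroup E] [InnerProductSpace 𝕜 E]

theorem norm_le_norm_apply_add_self {T : E →ₗ.[𝕜] E}
    (hT : ∀ x : T.domain, 0 ≤ RCLike.re ⟪(x : E), T x⟫_𝕜) (x : T.domain) :
    ‖(x : E)‖ ≤ ‖T x + x‖ := by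
  rcases (norm_nonneg (x : E)).eq_or_lt with hx | hx
  · exact hx ▸ norm_nonneg _
  refine le_of_mul_le_mul_left ?_ hx
  calc ‖(x : E)‖ * ‖(x : E)‖ = RCLike.re ⟪(x : E), x⟫_𝕜 := (inner_self_eq_norm_mul_norm _).symm
    _ ≤ RCLike.re ⟪(x : E), T x + x⟫_𝕜 := by
        rw [inner_add_right, AddMonoidHom.map_add]; linarith [hT x]
    _ ≤ ‖(x : E)‖ * ‖T x + x‖ := re_inner_le_norm _ _

theorem IsClosed.isClosed_range_apply_add_self [CompleteSpace E] {T : E →ₗ.[𝕜] E}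
    (hT : T.IsClosed) (hbound : ∀ x : T.domain, ‖(x : E)‖ ≤ ‖T x + x‖) :
    _root_.IsClosed (Set.range fun x : T.domain => T x + (x : E)) := by
  -- `A + I` on the domain is `(x, y) ↦ y + x` on the graph, which is complete since `T` is closed
  have : CompleteSpace T.graph := completeSpace_coe_iff_isComplete.mpr hT.isComplete
  let L : T.graph →L[𝕜] E :=
    (ContinuousLinearMap.snd 𝕜 E E + ContinuousLinearMap.fst 𝕜 E E).comp T.graph.subtypeL
  have hL : AntilipschitzWith 2 L := by
    refine L.antilipschitz_of_bound fun p => ?_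
    obtain ⟨_, hp⟩ := p
    obtain ⟨x, rfl⟩ := T.mem_graph_iff'.mp hp
    have hLx : L ⟨_, hp⟩ = T x + x := rfl
    have hTx : ‖T x‖ ≤ 2 * ‖T x + x‖ := by
      calc ‖T x‖ = ‖(T x + x) - x‖ := by rw [add_sub_cancel_right]
        _ ≤ ‖T x + x‖ + ‖(x : E)‖ := norm_sub_le _ _
        _ ≤ 2 * ‖T x + x‖ := by linarith [hbound x]
    rw [hLx, Submodule.coe_norm, Prod.norm_def, NNReal.coe_ofNat]
    exact max_le (by linarith [hbound x, norm_nonneg (T x + x)]) hTx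
  have hrange : Set.range L = Set.range fun x : T.domain => T x + (x : E) := by
    ext y
    constructor
    · rintro ⟨⟨_, hp⟩, rfl⟩
      obtain ⟨x, rfl⟩ := T.mem_graph_iff'.mp hp
      exact ⟨x, rfl⟩
    · rintro ⟨x, rfl⟩
      exact ⟨⟨_, T.mem_graph x⟩, rfl⟩
  exact hrange ▸ hL.isClosed_range L.uniformContinuous

variable [CompleteSpace E] {A : E →ₗ.[𝕜] E}

theorem _root_.IsSelfAdjoint.isFormalAdjoint (hA : IsSelfAdjoint A) : A.IsFormalAdjoint A := by
  simpa only [isSelfAdjoint_def.mp hA] using adjoint_isFormalAdjoint hA.dense_domain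

theorem _root_.IsSelfAdjoint.exists_mem_domain_of_inner_eq (hA : IsSelfAdjoint A) {w z : E}
    (hwz : ∀ x : A.domain, ⟪z, x⟫_𝕜 = ⟪w, A x⟫_𝕜) : ∃ hw : w ∈ A.domain, A ⟨w, hw⟩ = z := by
  have hw : w ∈ A†.domain := mem_adjoint_domain_of_exists w ⟨z, hwz⟩
  have hle : A† ≤ A := (isSelfAdjoint_def.mp hA).le
  exact ⟨hle.1 hw, (hle.2 rfl).symm.trans (adjoint_apply_eq hA.dense_domain ⟨w, hw⟩ hwz)⟩

theorem _root_.IsSelfAdjoint.exists_apply_add_self_eq (hA : IsSelfAdjoint A)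
    (hbound : ∀ x : A.domain, ‖(x : E)‖ ≤ ‖A x + x‖) (y : E) : ∃ x : A.domain, A x + x = y := by
  set R := LinearMap.range (A.toFun + A.domain.subtype)
  have hclosed : _root_.IsClosed (R : Set E) := by
    rw [LinearMap.coe_range]
    exact hA.isClosed.isClosed_range_apply_add_self hbound
  have horth : Rᗮ = ⊥ := by
    refine (Submodule.eq_bot_iff _).mpr fun w hw => ?_
    have hwA : ∀ x : A.domain, ⟪-w, x⟫_𝕜 = ⟪w, A x⟫_𝕜 := fun x => by
      have hx : ⟪w, A x + x⟫_𝕜 = 0 :=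
        Submodule.inner_left_of_mem_orthogonal (LinearMap.mem_range_self _ x) hw
      rw [inner_add_right] at hx
      rw [inner_neg_left]
      linear_combination -hx
    obtain ⟨hw', hAw⟩ := hA.exists_mem_domain_of_inner_eq hwA
    simpa only [hAw, neg_add_cancel, norm_zero, norm_le_zero_iff] using hbound ⟨w, hw'⟩
  have hR : R = ⊤ := by
    rw [← hclosed.submodule_topologicalClosure_eq, Submodule.topologicalClosure_eq_top_iff, horth]
  obtain ⟨x, hx⟩ : y ∈ R := hR ▸ Submodule.mem_top
  exact ⟨x, hx⟩

end LinearPMap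

theorem LinearIndependent.eq_of_sub_sum_smul_mem {R M ι : Type*} [Ring R] [AddCommGroup M]
    [Module R M] [Fintype ι] {v : ι → M} (hv : LinearIndependent R v) {V : Submodule R M}
    (hV : ∀ y ∈ Submodule.span R (Set.range v), y ∈ V → y = 0) {x : M} {a b : ι → R}
    (ha : x - ∑ i, a i • v i ∈ V) (hb : x - ∑ i, b i • v i ∈ V) : a = b := by
  have hdiff : ∑ i, (b i - a i) • v i = 0 := by
    refine hV _ (Submodule.sum_mem _ fun i _ => Submodule.smul_mem _ _ (Submodule.subset_span
      (Set.mem_range_self i))) ?_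
    convert V.sub_mem ha hb using 1
    simp only [sub_smul, Finset.sum_sub_distrib]
    abel
  funext i
  exact (sub_eq_zero.mp (Fintype.linearIndependent_iff.mp hv _ hdiff i)).symm

theorem LinearIndependent.exists_inner_eq {𝕜 E ι : Type*} [RCLike 𝕜] [NormedAddCommGroup E]
    [InnerProductSpace 𝕜 E] [Fintype ι] {v : ι → E} (hv : LinearIndependent 𝕜 v) (b : ι → 𝕜) :
    ∃ w : E, ∀ i, ⟪v i, w⟫_𝕜 = b i := by
  set M := Submodule.span 𝕜 (Set.range v)
  have : FiniteDimensional 𝕜 M := FiniteDimensional.span_of_finite 𝕜 (Set.finite_range v)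
  let φ : M →ₗ[𝕜] ι → 𝕜 := LinearMap.pi fun i => (innerₛₗ 𝕜 (v i)).comp M.subtype
  have hinj : Function.Injective φ := by
    refine (injective_iff_map_eq_zero φ).mpr fun x hx => ?_
    have hMx : M ≤ (𝕜 ∙ (x : E))ᗮ := Submodule.span_le.mpr <| Set.range_subset_iff.mpr fun i =>
      Submodule.mem_orthogonal_singleton_iff_inner_left.mpr (congrFun hx i)
    exact Subtype.ext <| inner_self_eq_zero.mp <|
      Submodule.mem_orthogonal_singleton_iff_inner_left.mp (hMx x.2)
  have hrank : Module.finrank 𝕜 M = Module.finrank 𝕜 (ι → 𝕜) := by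
    rw [finrank_span_eq_card hv, Module.finrank_fintype_fun_eq_card]
  obtain ⟨w, hw⟩ := (LinearMap.injective_iff_surjective_of_finrank_eq_finrank hrank).mp hinj b
  exact ⟨w, congrFun hw⟩

section symRestrict

open scoped ComplexConjugate

variable {H : Type*} [NormedAddCommGroup H] [InnerProductSpace ℂ H] [CompleteSpace H] {n : ℕ}
  {A₀ : H →ₗ.[ℂ] H} {h : Fin n → H}

theorem mem_symRestrict_domain_iff {x : H} :
    x ∈ (symRestrict A₀ h).domain ↔
      ∃ hx : x ∈ A₀.domain, ∀ j, ⟪h j, A₀ ⟨x, hx⟩ + x⟫_ℂ = 0 := by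
  simp only [symRestrict, LinearPMap.domRestrict_domain, Submodule.mem_inf, Submodule.mem_map,
    Submodule.mem_iInf, LinearMap.mem_ker]
  constructor
  · rintro ⟨⟨y, hy, rfl⟩, -⟩
    exact ⟨y.2, hy⟩
  · rintro ⟨hx, hxh⟩
    exact ⟨⟨⟨x, hx⟩, hxh, rfl⟩, hx⟩

theorem symRestrict_apply (x : (symRestrict A₀ h).domain) (hx : (x : H) ∈ A₀.domain) :
    symRestrict A₀ h x = A₀ ⟨x, hx⟩ :=
  LinearPMap.domRestrict_apply rfl

theorem inner_add_sum_smul_symRestrict_apply (hA : IsSelfAdjoint A₀) (u : A₀.domain)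
    (c : Fin n → ℂ) (x : (symRestrict A₀ h).domain) :
    ⟪(u : H) + ∑ j, c j • h j, symRestrict A₀ h x⟫_ℂ = ⟪A₀ u - ∑ j, c j • h j, (x : H)⟫_ℂ := by
  obtain ⟨hx, hxh⟩ := mem_symRestrict_domain_iff.mp x.2
  have hsum : ⟪∑ j, c j • h j, A₀ ⟨x, hx⟩ + x⟫_ℂ = 0 := by
    simp only [sum_inner, inner_smul_left, hxh, mul_zero, Finset.sum_const_zero]
  rw [symRestrict_apply x hx, inner_add_left, inner_sub_left, ← hA.isFormalAdjoint u ⟨x, hx⟩]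
  rw [inner_add_right] at hsum
  linear_combination hsum

theorem add_sum_smul_mem_symRestrict_adjoint_domain (hA : IsSelfAdjoint A₀) (u : A₀.domain)
    (c : Fin n → ℂ) : (u : H) + ∑ j, c j • h j ∈ (symRestrict A₀ h).adjoint.domain :=
  LinearPMap.mem_adjoint_domain_of_exists _
    ⟨_, fun x => (inner_add_sum_smul_symRestrict_apply hA u c x).symm⟩

theorem symRestrict_adjoint_apply (hA : IsSelfAdjoint A₀)
    (hdense : Dense ((symRestrict A₀ h).domain : Set H)) (f : (symRestrict A₀ h).adjoint.domain)
    {u : A₀.domain} {c : Fin n → ℂ} (hf : (f : H) = u + ∑ j, c j • h j) :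
    (symRestrict A₀ h).adjoint f = A₀ u - ∑ j, c j • h j :=
  LinearPMap.adjoint_apply_eq hdense f fun x => by
    rw [hf]; exact (inner_add_sum_smul_symRestrict_apply hA u c x).symm

theorem dense_symRestrict_domain (hA : IsSelfAdjoint A₀)
    (hsurj : ∀ y : H, ∃ x : A₀.domain, A₀ x + x = y)
    (hHindep : ∀ v ∈ Submodule.span ℂ (Set.range h), v ∈ A₀.domain → v = 0) :
    Dense ((symRestrict A₀ h).domain : Set H) := by
  rw [Submodule.dense_iff_topologicalClosure_eq_top, Submodule.topologicalClosure_eq_top_iff,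
    Submodule.eq_bot_iff]
  intro w hw
  obtain ⟨r, rfl⟩ := hsurj w
  have : FiniteDimensional ℂ (Submodule.span ℂ (Set.range h)) :=
    FiniteDimensional.span_of_finite ℂ (Set.finite_range h)
  have hr : (r : H) ∈ Submodule.span ℂ (Set.range h) := by
    rw [← Submodule.orthogonal_orthogonal (Submodule.span ℂ (Set.range h))]
    refine (Submodule.mem_orthogonal _ _).mpr fun m hm => ?_
    obtain ⟨s, rfl⟩ := hsurj m
    have hs : (s : H) ∈ (symRestrict A₀ h).domain := mem_symRestrict_domain_iff.mpr
      ⟨s.2, fun j => Submodule.inner_right_of_mem_orthogonal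
        (Submodule.subset_span (Set.mem_range_self j)) hm⟩
    calc ⟪A₀ s + s, (r : H)⟫_ℂ = ⟪(s : H), A₀ r + r⟫_ℂ := by
          rw [inner_add_left, inner_add_right, hA.isFormalAdjoint s r]
      _ = 0 := Submodule.inner_right_of_mem_orthogonal hs hw
  rw [show r = 0 from Subtype.ext (hHindep _ hr r.2)]
  simp

theorem inner_symRestrict_adjoint_sub_inner (hA : IsSelfAdjoint A₀)
    (hdense : Dense ((symRestrict A₀ h).domain : Set H))
    (f g : (symRestrict A₀ h).adjoint.domain) {u v : A₀.domain} {c d : Fin n → ℂ}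
    (hf : (f : H) = u + ∑ j, c j • h j) (hg : (g : H) = v + ∑ j, d j • h j) :
    ⟪(symRestrict A₀ h).adjoint f, (g : H)⟫_ℂ - ⟪(f : H), (symRestrict A₀ h).adjoint g⟫_ℂ =
      ∑ j, conj ⟪h j, A₀ u + u⟫_ℂ * d j - ∑ j, conj (c j) * ⟪h j, A₀ v + v⟫_ℂ := by
  have hsum_right : ⟪A₀ u + u, ∑ j, d j • h j⟫_ℂ = ∑ j, conj ⟪h j, A₀ u + u⟫_ℂ * d j := by
    simp only [inner_sum, inner_smul_right, inner_conj_symm, mul_comm]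
  have hsum_left : ⟪∑ j, c j • h j, A₀ v + v⟫_ℂ = ∑ j, conj (c j) * ⟪h j, A₀ v + v⟫_ℂ := by
    simp only [sum_inner, inner_smul_left]
  rw [symRestrict_adjoint_apply hA hdense f hf, symRestrict_adjoint_apply hA hdense g hg, hf, hg,
    ← hsum_right, ← hsum_left]
  simp only [inner_add_left, inner_add_right, inner_sub_left, inner_sub_right]
  linear_combination hA.isFormalAdjoint u v

end symRestrict

theorem hat_boundary_triplet_general
    {H : Type*} [NormedAddCommGroup H] [InnerProductSpace ℂ H] [CompleteSpace H]
    {n : ℕ} (A₀ : H →ₗ.[ℂ] H)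
    (hsa : A₀.adjoint = A₀)
    (hnonneg : ∀ x : A₀.domain, 0 ≤ (inner ℂ (x : H) (A₀ x) : ℂ).re)
    (h : Fin n → H) (hind : LinearIndependent ℂ h)
    (hHindep : ∀ v ∈ Submodule.span ℂ (Set.range h), v ∈ A₀.domain → v = 0)
    (Γ₀ Γ₁ : ((symRestrict A₀ h).adjoint.domain) →ₗ[ℂ] (Fin n → ℂ))
    -- `Γ̂₀ f` gives the coefficients `αⱼ` of the decomposition `f = u + ∑ αⱼ hⱼ`:
    (hdecomp : ∀ f : (symRestrict A₀ h).adjoint.domain,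
      ((f : H) - ∑ j : Fin n, Γ₀ f j • h j) ∈ A₀.domain)
    -- `Γ̂₁ f j = ⟨ψⱼ, u⟩ = ((A₀ + I)u, hⱼ)`:
    (hΓ₁ : ∀ f : (symRestrict A₀ h).adjoint.domain, ∀ j : Fin n,
      Γ₁ f j = inner ℂ (h j)
        ((A₀ ⟨(f : H) - ∑ j' : Fin n, Γ₀ f j' • h j', hdecomp f⟩ : H)
          + ((f : H) - ∑ j' : Fin n, Γ₀ f j' • h j'))) :
    (∀ f g : (symRestrict A₀ h).adjoint.domain,
      (inner ℂ ((symRestrict A₀ h).adjoint f) (g : H) : ℂ)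
          - inner ℂ (f : H) ((symRestrict A₀ h).adjoint g)
        = ∑ j : Fin n, (starRingEnd ℂ) (Γ₁ f j) * Γ₀ g j
          - ∑ j : Fin n, (starRingEnd ℂ) (Γ₀ f j) * Γ₁ g j) ∧
    (∀ a b : Fin n → ℂ, ∃ f : (symRestrict A₀ h).adjoint.domain,
      Γ₀ f = a ∧ Γ₁ f = b) := by
  have hA : IsSelfAdjoint A₀ := hsa
  have hsurj : ∀ y : H, ∃ x : A₀.domain, A₀ x + x = y :=
    hA.exists_apply_add_self_eq (LinearPMap.norm_le_norm_apply_add_self hnonneg)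
  have hdense := dense_symRestrict_domain hA hsurj hHindep
  let u (f : (symRestrict A₀ h).adjoint.domain) : A₀.domain := ⟨_, hdecomp f⟩
  have hu : ∀ f : (symRestrict A₀ h).adjoint.domain, (f : H) = u f + ∑ j, Γ₀ f j • h j :=
    fun f => (sub_add_cancel _ _).symm
  refine ⟨fun f g => ?_, fun a b => ?_⟩
  · simp only [hΓ₁]
    exact inner_symRestrict_adjoint_sub_inner hA hdense f g (hu f) (hu g)
  · obtain ⟨w, hw⟩ := hind.exists_inner_eq b
    obtain ⟨v, rfl⟩ := hsurj w
    let F : (symRestrict A₀ h).adjoint.domain :=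
      ⟨v + ∑ j, a j • h j, add_sum_smul_mem_symRestrict_adjoint_domain hA v a⟩
    have hF : (F : H) - ∑ j, a j • h j = v := add_sub_cancel_right _ _
    have hΓ₀ : Γ₀ F = a := hind.eq_of_sub_sum_smul_mem hHindep (hdecomp F) (hF ▸ v.2)
    have huF : u F = v := Subtype.ext (by rw [← hF, ← hΓ₀])
    refine ⟨F, hΓ₀, funext fun j => ?_⟩
    rw [← hw j, ← huF]
    exact hΓ₁ F j

/-- the maps `Γ̂₀ f = (α₁,…,αₙ)`, `Γ̂₁ f = (⟨ψ₁,u⟩,…,⟨ψₙ,u⟩)`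
coming from the decomposition `f = u + ∑ αⱼ hⱼ`, `u ∈ D(A₀)`, form a boundary
triplet for `A_sym*`: the Green identity holds and `(Γ̂₀, Γ̂₁)` is surjective
onto `ℂⁿ ⊕ ℂⁿ`. -/
theorem hat_boundary_triplet
    {H : Type*} [NormedAddCommGroup H] [InnerProductSpace ℂ H] [CompleteSpace H]
    {n : ℕ} (A₀ : H →ₗ.[ℂ] H)
    (hdense : Dense (A₀.domain : Set H)) (hsa : A₀.adjoint = A₀)
    (hnonneg : ∀ x : A₀.domain, 0 ≤ (inner ℂ (x : H) (A₀ x) : ℂ).re)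
    (h : Fin n → H) (hind : LinearIndependent ℂ h)
    (hHindep : ∀ v ∈ Submodule.span ℂ (Set.range h), v ∈ A₀.domain → v = 0)
    (Γ₀ Γ₁ : ((symRestrict A₀ h).adjoint.domain) →ₗ[ℂ] (Fin n → ℂ))
    -- `Γ̂₀ f` gives the coefficients `αⱼ` of the decomposition `f = u + ∑ αⱼ hⱼ`:
    (hdecomp : ∀ f : (symRestrict A₀ h).adjoint.domain,
      ((f : H) - ∑ j : Fin n, Γ₀ f j • h j) ∈ A₀.domain)
    -- `Γ̂₁ f j = ⟨ψⱼ, u⟩ = ((A₀ + I)u, hⱼ)`: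
    (hΓ₁ : ∀ f : (symRestrict A₀ h).adjoint.domain, ∀ j : Fin n,
      Γ₁ f j = inner ℂ (h j)
        ((A₀ ⟨(f : H) - ∑ j' : Fin n, Γ₀ f j' • h j', hdecomp f⟩ : H)
          + ((f : H) - ∑ j' : Fin n, Γ₀ f j' • h j'))) :
    (∀ f g : (symRestrict A₀ h).adjoint.domain,
      (inner ℂ ((symRestrict A₀ h).adjoint f) (g : H) : ℂ)
          - inner ℂ (f : H) ((symRestrict A₀ h).adjoint g)
        = ∑ j : Fin n, (starRingEnd ℂ) (Γ₁ f j) * Γ₀ g j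
          - ∑ j : Fin n, (starRingEnd ℂ) (Γ₀ f j) * Γ₁ g j) ∧
    (∀ a b : Fin n → ℂ, ∃ f : (symRestrict A₀ h).adjoint.domain,
      Γ₀ f = a ∧ Γ₁ f = b) :=
  hat_boundary_triplet_general A₀ hsa hnonneg h hind hHindep Γ₀ Γ₁ hdecomp hΓ₁
end
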